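/- Let T > 0, λ ∈ ℝ, and let a, m, σ, p : [0,T] → ℝ be continuous functions. Suppose x, y : [0,T] → ℝ are differentiable and satisfy x'(t) = (a(t) − m(t)p(t)) x(t) and y'(t) = (a(t) − m(t)p(t) + 2λ σ(t)² p(t)) y(t) for all t ∈ [0,T], with x(0) = y(0). Then y(t) = x(t) · exp(2λ ∫₀ᵗ σ(r)² p(r) dr) for every t ∈ [0,T]. -/

import Mathlib

open Set

/-!
Both mean equations are scalar linear ODEs, whose solutions are determined by their initial
value: `u' = c u` forces `u t = u 0 * exp (∫₀ᵗ c)`, because `u * exp (-∫₀ᵗ c)` has zero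
derivative. By the product rule and the fundamental theorem of calculus,
`x t * exp (2λ ∫₀ᵗ σ² p)` solves the equation of `y` with the same initial value, hence is `y`.
-/

section LinearODE

variable {a b : ℝ}

theorem hasDerivWithinAt_integral_Icc {f : ℝ → ℝ} (hf : ContinuousOn f (Icc a b)) {t : ℝ}
    (ht : t ∈ Icc a b) :
    HasDerivWithinAt (fun s => ∫ r in a..s, f r) (f t) (Icc a b) t := by
  have : Fact (t ∈ Icc a b) := ⟨ht⟩
  have hint : IntervalIntegrable f MeasureTheory.volume a t :=
    (hf.mono (by rw [uIcc_of_le ht.1]; exact Icc_subset_Icc_right ht.2)).intervalIntegrable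
  exact intervalIntegral.integral_hasDerivWithinAt_right hint
    (hf.stronglyMeasurableAtFilter_nhdsWithin measurableSet_Icc t) (hf t ht)

theorem constant_of_hasDerivWithinAt_Icc_zero {f : ℝ → ℝ}
    (hf : ∀ t ∈ Icc a b, HasDerivWithinAt f 0 (Icc a b) t) : ∀ t ∈ Icc a b, f t = f a :=
  constant_of_has_deriv_right_zero (fun t ht => (hf t ht).continuousWithinAt) fun t ht =>
    (hf t (Ico_subset_Icc_self ht)).mono_of_mem_nhdsWithin (Icc_mem_nhdsGE_of_mem ht)

variable {c u v : ℝ → ℝ}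

theorem eq_mul_exp_integral_of_hasDerivWithinAt_mul (hc : ContinuousOn c (Icc a b))
    (hu : ∀ t ∈ Icc a b, HasDerivWithinAt u (c t * u t) (Icc a b) t) :
    ∀ t ∈ Icc a b, u t = u a * Real.exp (∫ r in a..t, c r) := by
  have hΦ : ∀ t ∈ Icc a b, HasDerivWithinAt (fun s => u s * Real.exp (-∫ r in a..s, c r)) 0
      (Icc a b) t := fun t ht =>
    ((hu t ht).mul (hasDerivWithinAt_integral_Icc hc ht).neg.exp).congr_deriv (by ring)
  intro t ht
  have hconst := constant_of_hasDerivWithinAt_Icc_zero hΦ t ht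
  simp only [intervalIntegral.integral_same, neg_zero, Real.exp_zero, mul_one] at hconst
  rw [← hconst, mul_assoc, ← Real.exp_add, neg_add_cancel, Real.exp_zero, mul_one]

theorem eqOn_of_hasDerivWithinAt_mul (hc : ContinuousOn c (Icc a b))
    (hu : ∀ t ∈ Icc a b, HasDerivWithinAt u (c t * u t) (Icc a b) t)
    (hv : ∀ t ∈ Icc a b, HasDerivWithinAt v (c t * v t) (Icc a b) t) (hab : u a = v a) :
    ∀ t ∈ Icc a b, u t = v t := fun t ht => by
  rw [eq_mul_exp_integral_of_hasDerivWithinAt_mul hc hu t ht,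
    eq_mul_exp_integral_of_hasDerivWithinAt_mul hc hv t ht, hab]

end LinearODE

theorem mean_trajectory_exponential_relation_general (T : ℝ) (l : ℝ)
    (a m σ p : ℝ → ℝ)
    (hac : ContinuousOn a (Icc (0 : ℝ) T))
    (hmc : ContinuousOn m (Icc (0 : ℝ) T))
    (hσc : ContinuousOn σ (Icc (0 : ℝ) T))
    (hpc : ContinuousOn p (Icc (0 : ℝ) T))
    (x y : ℝ → ℝ)
    (hx : ∀ t ∈ Icc (0 : ℝ) T,
      HasDerivWithinAt x ((a t - m t * p t) * x t) (Icc (0 : ℝ) T) t)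
    (hy : ∀ t ∈ Icc (0 : ℝ) T,
      HasDerivWithinAt y ((a t - m t * p t + 2 * l * σ t ^ 2 * p t) * y t)
        (Icc (0 : ℝ) T) t)
    (h0 : x 0 = y 0) :
    ∀ t ∈ Icc (0 : ℝ) T,
      y t = x t * Real.exp (2 * l * ∫ r in (0 : ℝ)..t, σ r ^ 2 * p r) := by
  have hσ2p : ContinuousOn (fun r => σ r ^ 2 * p r) (Icc 0 T) := (hσc.pow 2).mul hpc
  have hcoef : ContinuousOn (fun t => a t - m t * p t + 2 * l * σ t ^ 2 * p t) (Icc 0 T) :=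
    (hac.sub (hmc.mul hpc)).add ((continuousOn_const.mul (hσc.pow 2)).mul hpc)
  have hz : ∀ t ∈ Icc (0 : ℝ) T, HasDerivWithinAt
      (fun s => x s * Real.exp (2 * l * ∫ r in (0 : ℝ)..s, σ r ^ 2 * p r))
      ((a t - m t * p t + 2 * l * σ t ^ 2 * p t) *
        (x t * Real.exp (2 * l * ∫ r in (0 : ℝ)..t, σ r ^ 2 * p r))) (Icc 0 T) t :=
    fun t ht => ((hx t ht).mul ((hasDerivWithinAt_integral_Icc hσ2p ht).const_mul (2 * l)).exp
      ).congr_deriv (by ring)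
  refine eqOn_of_hasDerivWithinAt_mul hcoef hy hz ?_
  simp [h0]

/-- Relation between the mean trajectories of the risk-sensitive and the robust
(adversarially) controlled systems:
`y(t) = x(t) · exp(2λ ∫₀ᵗ σ(r)² p(r) dr)`. -/
theorem mean_trajectory_exponential_relation (T : ℝ) (hT : 0 < T) (l : ℝ)
    (a m σ p : ℝ → ℝ)
    (hac : ContinuousOn a (Icc (0 : ℝ) T))
    (hmc : ContinuousOn m (Icc (0 : ℝ) T))
    (hσc : ContinuousOn σ (Icc (0 : ℝ) T))
    (hpc : ContinuousOn p (Icc (0 : ℝ) T))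
    (x y : ℝ → ℝ)
    (hx : ∀ t ∈ Icc (0 : ℝ) T,
      HasDerivWithinAt x ((a t - m t * p t) * x t) (Icc (0 : ℝ) T) t)
    (hy : ∀ t ∈ Icc (0 : ℝ) T,
      HasDerivWithinAt y ((a t - m t * p t + 2 * l * σ t ^ 2 * p t) * y t)
        (Icc (0 : ℝ) T) t)
    (h0 : x 0 = y 0) :
    ∀ t ∈ Icc (0 : ℝ) T,
      y t = x t * Real.exp (2 * l * ∫ r in (0 : ℝ)..t, σ r ^ 2 * p r) :=
  mean_trajectory_exponential_relation_general T l a m σ p hac hmc hσc hpc x y hx hy h0
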